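/- arXiv:2412.05719 — 3 statements merged into one kernel-verified Lean document; each statement's English description precedes it below -/
import Mathlib

section
/- Let x_{i−1} < x_i < x_{i+1} be real numbers. Define the auxiliary functions Ñ_{i−1}^1 = LB(·; x_{i−1}, x_i, 0, 1) and Ñ_i^0 = LB(·; x_i, x_{i+1}, 1, 0), and the assembled shape function N_i = Ñ_i^0 + Ñ_{i−1}^1 − 1. Then N_i(x) = 0 for all x ≤ x_{i−1}, N_i(x) = (x − x_{i−1})/(x_i − x_{i−1}) for x_{i−1} ≤ x ≤ x_i, N_i(x) = (x_{i+1} − x)/(x_{i+1} − x_i) for x_i ≤ x ≤ x_{i+1}, and N_i(x) = 0 for all x ≥ x_{i+1}. In particular N_i(x_i) = 1 and the assembly eliminates the non-zero tails of the auxiliary functions. -/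
/-- ReLU activation: ReLU(t) = max(t, 0). -/
noncomputable def relu (t : ℝ) : ℝ := max t 0

/-- The Linear Block: LB(x; x_a, x_b, y_a, y_b)
    = (y_b − y_a)·ReLU(−ReLU(−x + x_b)/(x_b − x_a) + 1) + y_a. -/
noncomputable def linearBlock (xa xb ya yb x : ℝ) : ℝ :=
  (yb - ya) * relu (-(relu (-x + xb)) / (xb - xa) + 1) + ya

/-!
Left of `x_b` the inner ReLU is the identity, so a Linear Block is `y_a` plus `(y_b − y_a)` times
the clipped ramp `ReLU((x − x_a)/(x_b − x_a))`; right of `x_b` it is constantly `y_b`.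
Hence `Ñ_{i−1}^1` is `0` up to `x_{i−1}` and `1` from `x_i` on, while `Ñ_i^0` is `1` up to `x_i`
and `0` from `x_{i+1}` on, so on each interval exactly one of them is non-constant and the
`− 1` cancels the other one.
-/

lemma relu_of_nonneg {t : ℝ} (ht : 0 ≤ t) : relu t = t := max_eq_left ht

lemma relu_of_nonpos {t : ℝ} (ht : t ≤ 0) : relu t = 0 := max_eq_right ht

section LinearBlock

variable {xa xb ya yb x : ℝ}

lemma linearBlock_of_le_right (hab : xa < xb) (hx : x ≤ xb) :
    linearBlock xa xb ya yb x = (yb - ya) * relu ((x - xa) / (xb - xa)) + ya := by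
  have hpos : xb - xa ≠ 0 := sub_ne_zero.mpr hab.ne'
  rw [linearBlock, relu_of_nonneg (by linarith : 0 ≤ -x + xb)]
  congr 3
  field_simp
  ring

lemma linearBlock_of_le_left (hab : xa < xb) (hx : x ≤ xa) :
    linearBlock xa xb ya yb x = ya := by
  rw [linearBlock_of_le_right hab (hx.trans hab.le),
    relu_of_nonpos (div_nonpos_of_nonpos_of_nonneg (by linarith) (by linarith))]
  ring

lemma linearBlock_of_mem_Icc (hab : xa < xb) (hxa : xa ≤ x) (hxb : x ≤ xb) :
    linearBlock xa xb ya yb x = (yb - ya) * ((x - xa) / (xb - xa)) + ya := by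
  rw [linearBlock_of_le_right hab hxb,
    relu_of_nonneg (div_nonneg (by linarith) (by linarith))]

lemma linearBlock_of_right_le (hx : xb ≤ x) : linearBlock xa xb ya yb x = yb := by
  rw [linearBlock, relu_of_nonpos (by linarith : -x + xb ≤ 0)]
  norm_num [relu]

end LinearBlock

theorem stmt1 (xim1 xi xip1 : ℝ) (h1 : xim1 < xi) (h2 : xi < xip1)
    -- auxiliary functions Ñ_{i−1}^1 and Ñ_i^0, and the assembled shape function N_i
    (Naux1 Naux0 Ni : ℝ → ℝ)
    (hNaux1 : Naux1 = fun x => linearBlock xim1 xi 0 1 x)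
    (hNaux0 : Naux0 = fun x => linearBlock xi xip1 1 0 x)
    (hNi : Ni = fun x => Naux0 x + Naux1 x - 1) :
    (∀ x : ℝ, x ≤ xim1 → Ni x = 0) ∧
    (∀ x : ℝ, xim1 ≤ x → x ≤ xi → Ni x = (x - xim1) / (xi - xim1)) ∧
    (∀ x : ℝ, xi ≤ x → x ≤ xip1 → Ni x = (xip1 - x) / (xip1 - xi)) ∧
    (∀ x : ℝ, xip1 ≤ x → Ni x = 0) ∧
    Ni xi = 1 := by
  subst hNaux1 hNaux0 hNi
  beta_reduce
  have rising (x : ℝ) (hx1 : xim1 ≤ x) (hx2 : x ≤ xi) :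
      linearBlock xi xip1 1 0 x + linearBlock xim1 xi 0 1 x - 1 = (x - xim1) / (xi - xim1) := by
    rw [linearBlock_of_le_left h2 hx2, linearBlock_of_mem_Icc h1 hx1 hx2]
    ring
  refine ⟨fun x hx => ?_, rising, fun x hx1 hx2 => ?_, fun x hx => ?_, ?_⟩
  · rw [linearBlock_of_le_left h2 (by linarith), linearBlock_of_le_left h1 hx]
    ring
  · rw [linearBlock_of_mem_Icc h2 hx1 hx2, linearBlock_of_right_le hx1]
    field_simp [sub_ne_zero.mpr h2.ne']
    ring
  · rw [linearBlock_of_right_le hx, linearBlock_of_right_le (by linarith : xi ≤ x)]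
    ring
  · rw [rising xi h1.le le_rfl, div_self (sub_ne_zero.mpr h1.ne')]
end

section
/- Let x_0 < x_1 < … < x_n (n ≥ 1) be a mesh of real numbers. Define on each element the auxiliary functions Ñ_i^0 = LB(·; x_i, x_{i+1}, 1, 0) and Ñ_i^1 = LB(·; x_i, x_{i+1}, 0, 1), and the assembled linear shape functions N_0 = Ñ_0^0, N_n = Ñ_{n−1}^1, and N_i = Ñ_i^0 + Ñ_{i−1}^1 − 1 for 1 ≤ i ≤ n−1. Then the shape functions satisfy the Lagrange (Kronecker delta) property: N_i(x_j) = 1 if i = j and N_i(x_j) = 0 if i ≠ j, for all 0 ≤ i, j ≤ n. -/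
/-- Assembled linear shape functions on a 1D mesh `x 0 < x 1 < … < x n`:
    `N 0 = Ñ_0^0`, `N n = Ñ_{n−1}^1`, and `N i = Ñ_i^0 + Ñ_{i−1}^1 − 1` for interior nodes,
    where `Ñ_i^0 = LB(·; x i, x (i+1), 1, 0)` and `Ñ_i^1 = LB(·; x i, x (i+1), 0, 1)`. -/
noncomputable def shapeFun (n : ℕ) (x : ℕ → ℝ) (i : ℕ) (t : ℝ) : ℝ :=
  if i = 0 then linearBlock (x 0) (x 1) 1 0 t
  else if i = n then linearBlock (x (n - 1)) (x n) 0 1 t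
  else linearBlock (x i) (x (i + 1)) 1 0 t + linearBlock (x (i - 1)) (x i) 0 1 t - 1

lemma lb_left (xa xb ya yb x : ℝ) (h : xa < xb) (hx : x ≤ xa) :
    linearBlock xa xb ya yb x = ya := by
  unfold linearBlock relu
  have h1 : (0:ℝ) ≤ -x + xb := by linarith
  rw [max_eq_left h1]
  have h2 : -(-x + xb) / (xb - xa) + 1 ≤ 0 := by
    rw [div_add' _ _ _ (by linarith : xb - xa ≠ 0)]
    apply div_nonpos_of_nonpos_of_nonneg <;> linarith
  rw [max_eq_right h2]
  ring

lemma lb_right (xa xb ya yb x : ℝ) (h : xa < xb) (hx : xb ≤ x) :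
    linearBlock xa xb ya yb x = yb := by
  unfold linearBlock relu
  have h1 : -x + xb ≤ 0 := by linarith
  rw [max_eq_right h1, neg_zero, zero_div, zero_add, max_eq_left (by norm_num : (1:ℝ) ≥ 0)]
  ring

theorem stmt2 (n : ℕ) (hn : 1 ≤ n) (x : ℕ → ℝ)
    (hmono : ∀ i : ℕ, i < n → x i < x (i + 1)) :
    ∀ i j : ℕ, i ≤ n → j ≤ n →
      shapeFun n x i (x j) = if i = j then 1 else 0 := by
  have key : ∀ b, b ≤ n → ∀ a, a < b → x a < x b := by
    intro b
    induction b with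
    | zero => intro _ a ha; omega
    | succ m ih =>
      intro hm a ha
      rcases Nat.lt_succ_iff_lt_or_eq.mp ha with h | h
      · exact lt_trans (ih (by omega) a h) (hmono m (by omega))
      · subst h; exact hmono a (by omega)
  have keyle : ∀ a b, b ≤ n → a ≤ b → x a ≤ x b := by
    intro a b hb hab
    rcases eq_or_lt_of_le hab with h | h
    · subst h; rfl
    · exact le_of_lt (key b hb a h)
  intro i j hi hj
  unfold shapeFun
  by_cases hi0 : i = 0
  · subst hi0
    simp only [if_true]
    by_cases hj0 : j = 0
    · subst hj0
      rw [lb_left _ _ _ _ _ (hmono 0 hn) le_rfl]; simp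
    · rw [lb_right _ _ _ _ _ (hmono 0 hn) (keyle 1 j hj (by omega))]
      simp [Ne.symm hj0, hj0]
  · rw [if_neg hi0]
    by_cases hin : i = n
    · rw [if_pos hin]
      have e : n - 1 + 1 = n := by omega
      have hnn : x (n-1) < x n := by have := hmono (n-1) (by omega); rwa [e] at this
      by_cases hjn : j = n
      · subst hjn
        rw [lb_right _ _ _ _ _ hnn le_rfl]; simp [hin]
      · rw [lb_left _ _ _ _ _ hnn (keyle j (n-1) (by omega) (by omega))]
        simp [show i ≠ j by omega]
    · rw [if_neg hin]
      have hilt : i < n := lt_of_le_of_ne hi hin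
      have h1 : x i < x (i+1) := hmono i hilt
      have h2 : x (i-1) < x i := by
        have e : i - 1 + 1 = i := by omega
        have := hmono (i-1) (by omega); rwa [e] at this
      by_cases hji : j = i
      · subst hji
        rw [lb_left _ _ _ _ _ h1 le_rfl, lb_right _ _ _ _ _ h2 le_rfl]
        simp
      · rcases lt_or_gt_of_ne hji with h | h
        · rw [lb_left _ _ _ _ _ h1 (keyle j i (by omega) (by omega)),
            lb_left _ _ _ _ _ h2 (keyle j (i-1) (by omega) (by omega))]
          simp [hji, Ne.symm hji]
        · rw [lb_right _ _ _ _ _ h1 (keyle (i+1) j hj (by omega)),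
            lb_right _ _ _ _ _ h2 (keyle i j hj (by omega))]
          simp [hji, Ne.symm hji]
end

section
/- Let x_0 < x_1 < … < x_n (n ≥ 1) be a mesh of real numbers. Define on each element the auxiliary functions Ñ_i^0 = LB(·; x_i, x_{i+1}, 1, 0) and Ñ_i^1 = LB(·; x_i, x_{i+1}, 0, 1), and the assembled linear shape functions N_0 = Ñ_0^0, N_n = Ñ_{n−1}^1, and N_i = Ñ_i^0 + Ñ_{i−1}^1 − 1 for 1 ≤ i ≤ n−1. Then the shape functions form a partition of unity on the domain: for every x with x_0 ≤ x ≤ x_n, the sum over all i from 0 to n of N_i(x) equals 1. -/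
lemma lb_compl (a b t : ℝ) : linearBlock a b 1 0 t = 1 - linearBlock a b 0 1 t := by
  simp [linearBlock]; ring

theorem stmt3 (n : ℕ) (hn : 1 ≤ n) (x : ℕ → ℝ)
    (hmono : ∀ i : ℕ, i < n → x i < x (i + 1)) :
    ∀ t : ℝ, x 0 ≤ t → t ≤ x n →
      ∑ i ∈ Finset.range (n + 1), shapeFun n x i t = 1 := by
  intro t _ _
  obtain ⟨m, rfl⟩ : ∃ m, n = m + 1 := ⟨n - 1, (Nat.succ_pred_eq_of_pos hn).symm⟩
  set g : ℕ → ℝ := fun i => linearBlock (x i) (x (i + 1)) 0 1 t with hg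
  rw [Finset.sum_range_succ, Finset.sum_range_succ']
  have h0 : shapeFun (m + 1) x 0 t = 1 - g 0 := by
    simp [shapeFun, lb_compl, hg]
  have hlast : shapeFun (m + 1) x (m + 1) t = g m := by
    simp [shapeFun, hg]
  have hmid : ∀ i ∈ Finset.range m, shapeFun (m + 1) x (i + 1) t = g i - g (i + 1) := by
    intro i hi
    rw [Finset.mem_range] at hi
    have h1 : i + 1 ≠ 0 := by omega
    have h2 : i + 1 ≠ m + 1 := by omega
    simp only [shapeFun, if_neg h1, if_neg h2, Nat.add_sub_cancel, lb_compl, hg]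
    ring
  rw [h0, hlast, Finset.sum_congr rfl hmid, Finset.sum_range_sub' g]
  ring
end
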